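/- Let e ≥ 1 be an odd integer and n ≥ 1. The exponent of Φ_{2e}(x) in G_O(n,x) (the largest k such that Φ_{2e}(x)^k divides G_O(n,x) in ℤ[x]) equals Σ_{j>1, j odd} ⌊n/(e·j)⌋; consequently, for every odd partition λ of n, the exponent of Φ_{2e}(x) in h_{O,λ}(x)/G_O(n,x) equals ⌊n/e⌋ − Σ_{j≥1, j odd} m_λ(e·j). -/
import Mathlib

open Polynomial Finset
open scoped Classical

section Aux

private lemma cyc_prime {e : ℕ} (he : 0 < e) : Prime (cyclotomic e ℤ) :=
  UniqueFactorizationMonoid.irreducible_iff_prime.mp (cyclotomic.irreducible he)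

private lemma cyc_eq_of_dvd {a b : ℕ} (ha : 0 < a) (hb : 0 < b)
    (h : cyclotomic a ℤ ∣ cyclotomic b ℤ) : a = b :=
  cyclotomic_injective (R := ℤ) <|
    eq_of_monic_of_associated (cyclotomic.monic a ℤ) (cyclotomic.monic b ℤ) <|
      (cyclotomic.irreducible ha).associated_of_dvd (cyclotomic.irreducible hb) h

private lemma cyc_dvd_X_pow_sub_one_iff {e m : ℕ} (he : 0 < e) (hm : 0 < m) :
    cyclotomic e ℤ ∣ X ^ m - 1 ↔ e ∣ m := by
  constructor
  · intro h
    rw [← prod_cyclotomic_eq_X_pow_sub_one hm ℤ] at h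
    obtain ⟨d, hd, hdvd⟩ := ((cyc_prime he).dvd_finset_prod_iff _).1 h
    have hd' := Nat.mem_divisors.1 hd
    have := cyc_eq_of_dvd he (Nat.pos_of_mem_divisors hd) hdvd
    exact this ▸ hd'.1
  · intro h
    rw [← prod_cyclotomic_eq_X_pow_sub_one hm ℤ]
    exact Finset.dvd_prod_of_mem _ (Nat.mem_divisors.2 ⟨h, hm.ne'⟩)

private lemma Xpow_factor {e m : ℕ} (he : 0 < e) (hm : 0 < m) (hdvd : e ∣ m) :
    ∃ c, (X ^ m - 1 : Polynomial ℤ) = cyclotomic e ℤ * c ∧ ¬ cyclotomic e ℤ ∣ c := by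
  have hmem : e ∈ m.divisors := Nat.mem_divisors.2 ⟨hdvd, hm.ne'⟩
  refine ⟨∏ d ∈ m.divisors.erase e, cyclotomic d ℤ, ?_, ?_⟩
  · rw [← prod_cyclotomic_eq_X_pow_sub_one hm ℤ]
    exact (Finset.mul_prod_erase m.divisors (fun d => cyclotomic d ℤ) hmem).symm
  · intro h
    obtain ⟨d, hd, hdvd'⟩ := ((cyc_prime he).dvd_finset_prod_iff _).1 h
    have hd0 : 0 < d := Nat.pos_of_mem_divisors (Finset.mem_of_mem_erase hd)
    exact (Finset.ne_of_mem_erase hd).symm (cyc_eq_of_dvd he hd0 hdvd')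

private lemma X_sq_split (i : ℕ) :
    (X ^ (2 * i) - 1 : Polynomial ℤ) = (X ^ i - 1) * (X ^ i + 1) := by
  rw [two_mul, pow_add]; ring

private lemma one_add_X_pow_factor {e i : ℕ} (he : Odd e) (hi : Odd i) (hei : e ∣ i) :
    ∃ c, (1 + X ^ i : Polynomial ℤ) = cyclotomic (2 * e) ℤ * c ∧
      ¬ cyclotomic (2 * e) ℤ ∣ c := by
  have he0 : 0 < e := he.pos
  have hi0 : 0 < i := hi.pos
  have h2e : 0 < 2 * e := by omega
  have h2i : 0 < 2 * i := by omega
  have hp := cyc_prime h2e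
  obtain ⟨c, hc, hnc⟩ := Xpow_factor h2e h2i (mul_dvd_mul_left 2 hei)
  have hnd1 : ¬ cyclotomic (2 * e) ℤ ∣ (X ^ i - 1) := by
    intro h
    have := (cyc_dvd_X_pow_sub_one_iff h2e hi0).1 h
    have : 2 ∣ i := dvd_trans ⟨e, rfl⟩ this
    exact (Nat.odd_iff.1 hi).symm.trans_ne (by omega) rfl
  have hdvd2i : cyclotomic (2 * e) ℤ ∣ X ^ (2 * i) - 1 := ⟨c, hc⟩
  rw [X_sq_split] at hdvd2i
  have hdvd : cyclotomic (2 * e) ℤ ∣ X ^ i + 1 :=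
    (hp.dvd_mul.1 hdvd2i).resolve_left hnd1
  obtain ⟨c', hc'⟩ := hdvd
  refine ⟨c', by rw [add_comm]; exact hc', ?_⟩
  intro hdc'
  have hsq : cyclotomic (2 * e) ℤ * cyclotomic (2 * e) ℤ ∣ X ^ i + 1 := by
    rw [hc']; exact mul_dvd_mul_left _ hdc'
  have hsq' : cyclotomic (2 * e) ℤ * cyclotomic (2 * e) ℤ ∣ X ^ (2 * i) - 1 :=
    hsq.trans (by rw [X_sq_split]; exact Dvd.intro_left _ rfl)
  rw [hc] at hsq'
  have := (mul_dvd_mul_iff_left (a := cyclotomic (2 * e) ℤ) hp.ne_zero).1 hsq'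
  exact hnc this

private lemma not_dvd_one_add_X_pow {e i : ℕ} (he0 : 0 < e) (hi : Odd i) (hei : ¬ e ∣ i) :
    ¬ cyclotomic (2 * e) ℤ ∣ (1 + X ^ i : Polynomial ℤ) := by
  intro h
  have hi0 : 0 < i := hi.pos
  have h2e : 0 < 2 * e := by omega
  have h2i : 0 < 2 * i := by omega
  have h1 : cyclotomic (2 * e) ℤ ∣ X ^ (2 * i) - 1 := by
    refine h.trans ?_
    rw [X_sq_split, add_comm]
    exact Dvd.intro_left _ rfl
  have := (cyc_dvd_X_pow_sub_one_iff h2e h2i).1 h1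
  exact hei ((mul_dvd_mul_iff_left (a := 2) (by norm_num)).1 this)

/-- the key factorization of a product of `(1+X^i)^(a i)` -/
private lemma prod_factor {e : ℕ} (he : Odd e) (s : Finset ℕ) (hs : ∀ i ∈ s, Odd i)
    (a : ℕ → ℕ) :
    ∃ u : Polynomial ℤ, (∏ i ∈ s, ((1 : Polynomial ℤ) + X ^ i) ^ a i) =
      cyclotomic (2 * e) ℤ ^ (∑ i ∈ s.filter (fun i => e ∣ i), a i) * u ∧
      ¬ cyclotomic (2 * e) ℤ ∣ u := by
  have he0 : 0 < e := he.pos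
  have hp := cyc_prime (show 0 < 2 * e by omega)
  have hch : ∀ i ∈ s.filter (fun i => e ∣ i),
      ∃ c, (1 + X ^ i : Polynomial ℤ) = cyclotomic (2 * e) ℤ * c ∧
        ¬ cyclotomic (2 * e) ℤ ∣ c := by
    intro i hi
    rw [Finset.mem_filter] at hi
    exact one_add_X_pow_factor he (hs i hi.1) hi.2
  choose! c hc hnc using hch
  refine ⟨(∏ i ∈ s.filter (fun i => e ∣ i), c i ^ a i) *
      ∏ i ∈ s.filter (fun i => ¬ e ∣ i), ((1 : Polynomial ℤ) + X ^ i) ^ a i, ?_, ?_⟩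
  · rw [← Finset.prod_filter_mul_prod_filter_not s (fun i => e ∣ i)]
    have h1 : ∏ i ∈ s.filter (fun i => e ∣ i), ((1 : Polynomial ℤ) + X ^ i) ^ a i =
        cyclotomic (2 * e) ℤ ^ (∑ i ∈ s.filter (fun i => e ∣ i), a i) *
          ∏ i ∈ s.filter (fun i => e ∣ i), c i ^ a i := by
      rw [← Finset.prod_pow_eq_pow_sum, ← Finset.prod_mul_distrib]
      exact Finset.prod_congr rfl fun i hi => by rw [hc i hi, mul_pow]
    rw [h1]; ring
  · intro hdvd
    rcases hp.dvd_mul.1 hdvd with h | h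
    · obtain ⟨i, hi, hdi⟩ := (hp.dvd_finset_prod_iff _).1 h
      exact hnc i hi (hp.dvd_of_dvd_pow hdi)
    · obtain ⟨i, hi, hdi⟩ := (hp.dvd_finset_prod_iff _).1 h
      rw [Finset.mem_filter] at hi
      exact not_dvd_one_add_X_pow he0 (hs i hi.1) hi.2 (hp.dvd_of_dvd_pow hdi)

private lemma multiset_sum_count_mul (P : Multiset ℕ) :
    ∑ m ∈ P.toFinset, P.count m * m = P.sum := by
  conv_rhs => rw [← Multiset.toFinset_sum_count_nsmul_eq P]
  rw [show (∑ a ∈ P.toFinset, P.count a • ({a} : Multiset ℕ)).sum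
      = ∑ a ∈ P.toFinset, (P.count a • ({a} : Multiset ℕ)).sum from
    map_sum Multiset.sumAddMonoidHom _ _]
  refine Finset.sum_congr rfl fun a _ => ?_
  rw [Multiset.nsmul_singleton, Multiset.sum_replicate, smul_eq_mul]

private lemma sum_mul_count_le (P : Multiset ℕ) (G : Finset ℕ) :
    ∑ m ∈ G, m * P.count m ≤ P.sum := by
  have h1 : ∑ m ∈ G, m * P.count m = ∑ m ∈ G ∩ P.toFinset, m * P.count m := by
    refine (Finset.sum_subset Finset.inter_subset_left ?_).symm
    intro m hm hm'
    have : m ∉ P.toFinset := fun h => hm' (Finset.mem_inter.2 ⟨hm, h⟩)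
    simp [Multiset.count_eq_zero_of_notMem (fun h => this (Multiset.mem_toFinset.2 h))]
  rw [h1]
  calc ∑ m ∈ G ∩ P.toFinset, m * P.count m
      ≤ ∑ m ∈ P.toFinset, m * P.count m :=
        Finset.sum_le_sum_of_subset Finset.inter_subset_right
    _ = P.sum := by rw [← multiset_sum_count_mul]; exact Finset.sum_congr rfl fun m _ => mul_comm _ _

end Aux

section Arith

private lemma mem_parts_le {n : ℕ} (μ : Nat.Partition n) {m : ℕ} (hm : m ∈ μ.parts) :
    m ≤ n :=
  μ.parts_sum ▸ Multiset.single_le_sum (fun x _ => Nat.zero_le x) m hm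

private lemma count_eq_zero_of_gt {n : ℕ} (μ : Nat.Partition n) {m : ℕ} (h : n < m) :
    μ.parts.count m = 0 :=
  Multiset.count_eq_zero.2 fun hm => absurd (mem_parts_le μ hm) (by omega)

private lemma count_mul_self_le {n : ℕ} (μ : Nat.Partition n) (i : ℕ) :
    i * μ.parts.count i ≤ n := by
  have := sum_mul_count_le μ.parts {i}
  simpa [μ.parts_sum] using this

private lemma count_le_div {n : ℕ} (μ : Nat.Partition n) {i : ℕ} (hi : 0 < i) :
    μ.parts.count i ≤ n / i := by
  rw [Nat.le_div_iff_mul_le hi, mul_comm]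
  exact count_mul_self_le μ i

private lemma S_le_div {n e : ℕ} (he0 : 0 < e) (μ : Nat.Partition n) :
    ∑ j ∈ (Finset.Icc 1 n).filter (fun j => Odd j), μ.parts.count (e * j) ≤ n / e := by
  rw [Nat.le_div_iff_mul_le he0]
  have hinj : ∀ x ∈ (Finset.Icc 1 n).filter (fun j => Odd j),
      ∀ y ∈ (Finset.Icc 1 n).filter (fun j => Odd j), e * x = e * y → x = y :=
    fun x _ y _ h => Nat.eq_of_mul_eq_mul_left he0 h
  calc (∑ j ∈ (Finset.Icc 1 n).filter (fun j => Odd j), μ.parts.count (e * j)) * e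
      = ∑ j ∈ (Finset.Icc 1 n).filter (fun j => Odd j), μ.parts.count (e * j) * e := by
        rw [Finset.sum_mul]
    _ ≤ ∑ j ∈ (Finset.Icc 1 n).filter (fun j => Odd j), (e * j) * μ.parts.count (e * j) := by
        refine Finset.sum_le_sum fun j hj => ?_
        rw [Finset.mem_filter, Finset.mem_Icc] at hj
        have : e ≤ e * j := Nat.le_mul_of_pos_right e (by omega)
        calc μ.parts.count (e * j) * e = e * μ.parts.count (e * j) := mul_comm _ _
          _ ≤ (e * j) * μ.parts.count (e * j) := Nat.mul_le_mul_right _ this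
    _ = ∑ m ∈ ((Finset.Icc 1 n).filter (fun j => Odd j)).image (fun j => e * j),
          m * μ.parts.count m :=
          (Finset.sum_image (f := fun m => m * μ.parts.count m) hinj).symm
    _ ≤ μ.parts.sum := sum_mul_count_le _ _
    _ = n := μ.parts_sum

private lemma filter_dvd_eq_image {e n : ℕ} (he : Odd e) :
    ((Finset.Icc 1 n).filter (fun i => Odd i)).filter (fun i => e ∣ i) =
      (((Finset.Icc 1 n).filter (fun j => Odd j)).filter (fun j => e * j ≤ n)).image
        (fun j => e * j) := by
  have he0 : 0 < e := he.pos
  ext i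
  simp only [Finset.mem_image, Finset.mem_filter, Finset.mem_Icc]
  constructor
  · rintro ⟨⟨⟨h1, h2⟩, h3⟩, j, rfl⟩
    have hj1 : 1 ≤ j := by rcases Nat.eq_zero_or_pos j with rfl | h; · omega
                           · exact h
    refine ⟨j, ⟨⟨⟨hj1, ?_⟩, (Nat.odd_mul.1 h3).2⟩, h2⟩, rfl⟩
    calc j ≤ e * j := Nat.le_mul_of_pos_left j he0
      _ ≤ n := h2
  · rintro ⟨j, ⟨⟨⟨hj1, _⟩, hjodd⟩, hejn⟩, rfl⟩
    exact ⟨⟨⟨Nat.mul_pos he0 hj1, hejn⟩, Nat.odd_mul.2 ⟨he, hjodd⟩⟩, j, rfl⟩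

private lemma icc_filter_odd_insert {n : ℕ} (hn : 1 ≤ n) :
    (Finset.Icc 1 n).filter (fun j => Odd j) =
      insert 1 ((Finset.Icc 3 n).filter (fun j => Odd j)) := by
  ext j
  simp only [Finset.mem_filter, Finset.mem_Icc, Finset.mem_insert, Nat.odd_iff]
  omega

private lemma one_not_mem_icc3 {n : ℕ} :
    1 ∉ (Finset.Icc 3 n).filter (fun j => Odd j) := by
  simp [Finset.mem_filter, Finset.mem_Icc]

private lemma sum_div_eq {e n : ℕ} (he : Odd e) (hn : 1 ≤ n) :
    ∑ i ∈ ((Finset.Icc 1 n).filter (fun i => Odd i)).filter (fun i => e ∣ i), n / i =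
      n / e + ∑ j ∈ (Finset.Icc 3 n).filter (fun j => Odd j), n / (e * j) := by
  rw [filter_dvd_eq_image he, Finset.sum_image
    (fun x _ y _ h => Nat.eq_of_mul_eq_mul_left he.pos h)]
  rw [Finset.sum_subset (Finset.filter_subset _ _)
    (fun j _ hj => by
      rw [Finset.mem_filter] at hj
      have : n < e * j := by
        by_contra h
        exact hj ⟨by assumption, by omega⟩
      exact Nat.div_eq_of_lt this)]
  rw [icc_filter_odd_insert hn, Finset.sum_insert one_not_mem_icc3, mul_one]

private lemma sum_count_eq {e n : ℕ} (he : Odd e) (μ : Nat.Partition n) :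
    ∑ i ∈ ((Finset.Icc 1 n).filter (fun i => Odd i)).filter (fun i => e ∣ i),
        μ.parts.count i =
      ∑ j ∈ (Finset.Icc 1 n).filter (fun j => Odd j), μ.parts.count (e * j) := by
  rw [filter_dvd_eq_image he, Finset.sum_image
    (fun x _ y _ h => Nat.eq_of_mul_eq_mul_left he.pos h)]
  refine Finset.sum_subset (Finset.filter_subset _ _) fun j hj hj' => ?_
  rw [Finset.mem_filter] at hj'
  have : n < e * j := by
    by_contra h
    exact hj' ⟨hj, by omega⟩
  exact count_eq_zero_of_gt μ this

private lemma E_eq {e n : ℕ} (he : Odd e) (hn : 1 ≤ n) (μ : Nat.Partition n) :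
    ∑ i ∈ ((Finset.Icc 1 n).filter (fun i => Odd i)).filter (fun i => e ∣ i),
        (n / i - μ.parts.count i) =
      (n / e + ∑ j ∈ (Finset.Icc 3 n).filter (fun j => Odd j), n / (e * j)) -
        ∑ j ∈ (Finset.Icc 1 n).filter (fun j => Odd j), μ.parts.count (e * j) := by
  rw [Finset.sum_tsub_distrib _ (fun i hi => ?_), sum_div_eq he hn, sum_count_eq he μ]
  rw [Finset.mem_filter, Finset.mem_filter, Finset.mem_Icc] at hi
  exact count_le_div μ (by omega)

end Arith

/-- The special partition `(e^(n/e), 1^(n%e))`. -/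
private def specialP (n e : ℕ) (he0 : 0 < e) : Nat.Partition n where
  parts := Multiset.replicate (n / e) e + Multiset.replicate (n % e) 1
  parts_pos := by
    intro i hi
    rcases Multiset.mem_add.1 hi with h | h <;> rw [Multiset.eq_of_mem_replicate h] <;> omega
  parts_sum := by
    rw [Multiset.sum_add, Multiset.sum_replicate, Multiset.sum_replicate,
      smul_eq_mul, smul_eq_mul, mul_one, mul_comm (n / e) e]
    exact Nat.div_add_mod n e

private lemma specialP_mem_odd {n e : ℕ} (he : Odd e) :
    ∀ i ∈ (specialP n e he.pos).parts, Odd i := by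
  intro i hi
  rcases Multiset.mem_add.1 hi with h | h <;> rw [Multiset.eq_of_mem_replicate h]
  · exact he
  · exact odd_one

private lemma specialP_count {n e : ℕ} (he0 : 0 < e) (m : ℕ) :
    (specialP n e he0).parts.count m =
      (if m = e then n / e else 0) + (if m = 1 then n % e else 0) := by
  simp [specialP, Multiset.count_replicate]
  split_ifs <;> omega

private lemma specialP_S {n e : ℕ} (he : Odd e) (hn : 1 ≤ n) :
    ∑ j ∈ (Finset.Icc 1 n).filter (fun j => Odd j),
        (specialP n e he.pos).parts.count (e * j) = n / e := by
  have he0 : 0 < e := he.pos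
  rw [Finset.sum_eq_single_of_mem 1
    (by simp [Finset.mem_filter, Finset.mem_Icc, hn])]
  · rw [mul_one, specialP_count]
    rcases eq_or_ne e 1 with rfl | h
    · simp [Nat.mod_one]
    · simp [h]
  · intro j hj hj1
    rw [specialP_count]
    have h1 : e * j ≠ e := fun h => hj1 (Nat.eq_of_mul_eq_mul_left he0 (by omega))
    have h2 : e * j ≠ 1 := fun h => hj1 (by
      have := Nat.eq_one_of_mul_eq_one_left h
      have := Nat.eq_one_of_mul_eq_one_right h
      omega)
    simp [h1, h2]

/-- The odd partitions of `n`: partitions of `n` all of whose parts are odd. -/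
noncomputable def oddParts (n : ℕ) : Finset (Nat.Partition n) :=
  Finset.univ.filter (fun μ => ∀ i ∈ μ.parts, Odd i)

/-- `h_{O,λ}(x) = ∏_{i odd, 1 ≤ i ≤ n} (1+x^i)^(⌊n/i⌋ - m_λ(i))` in `ℤ[x]`. -/
noncomputable def hO (n : ℕ) (μ : Nat.Partition n) : Polynomial ℤ :=
  ∏ i ∈ (Finset.Icc 1 n).filter (fun i => Odd i),
    (1 + X ^ i) ^ (n / i - μ.parts.count i)

/-- `G_O(n,x)`: the (normalized) gcd of the `h_{O,λ}(x)` over odd partitions `λ` of `n`. -/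
noncomputable def GO (n : ℕ) : Polynomial ℤ :=
  (oddParts n).gcd (hO n)

theorem GO_dvd_sum (n : ℕ) :
    ∃ q : Polynomial ℤ, (∑ μ ∈ oddParts n, hO n μ) = GO n * q :=
  exists_eq_mul_right_of_dvd (Finset.dvd_sum fun _ hμ => Finset.gcd_dvd hμ)

/-- `num_O(n,x) = (∑_{λ odd partition of n} h_{O,λ}(x)) / G_O(n,x)`. -/
noncomputable def numO (n : ℕ) : Polynomial ℤ :=
  (GO_dvd_sum n).choose

/-- Let `e ≥ 1` be odd and `n ≥ 1`.  The exponent of `Φ_{2e}(x)` in `G_O(n,x)` (the largest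
`k` such that `Φ_{2e}(x)^k` divides `G_O(n,x)` in `ℤ[x]`) equals `Σ_{j>1, j odd} ⌊n/(e·j)⌋`;
consequently, for every odd partition `λ` of `n`, the exponent of `Φ_{2e}(x)` in
`q_{O,λ} := h_{O,λ}(x)/G_O(n,x)` equals `⌊n/e⌋ − Σ_{j≥1, j odd} m_λ(e·j)`.
(The sums over odd `j` are truncated at `j = n`, since the omitted terms vanish; the
quotient `q` is characterized by `h_{O,λ} = G_O(n,x)·q`.) -/
theorem exponent_of_cyclotomic_in_GO (e n : ℕ) (he : Odd e) (hn : 1 ≤ n) :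
    (Polynomial.cyclotomic (2 * e) ℤ ^
        (∑ j ∈ (Finset.Icc 3 n).filter (fun j => Odd j), n / (e * j)) ∣ GO n ∧
      ¬ Polynomial.cyclotomic (2 * e) ℤ ^
        ((∑ j ∈ (Finset.Icc 3 n).filter (fun j => Odd j), n / (e * j)) + 1) ∣ GO n) ∧
    ∀ μ ∈ oddParts n, ∀ q : Polynomial ℤ, hO n μ = GO n * q →
      ∃ k : ℕ,
        (k : ℤ) = (n / e : ℕ) -
            ∑ j ∈ (Finset.Icc 1 n).filter (fun j => Odd j), (μ.parts.count (e * j) : ℤ) ∧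
        Polynomial.cyclotomic (2 * e) ℤ ^ k ∣ q ∧
        ¬ Polynomial.cyclotomic (2 * e) ℤ ^ (k + 1) ∣ q := by
  have he0 : 0 < e := he.pos
  have hp : Prime (cyclotomic (2 * e) ℤ) := cyc_prime (by omega)
  set p := cyclotomic (2 * e) ℤ with hp_def
  set K := ∑ j ∈ (Finset.Icc 3 n).filter (fun j => Odd j), n / (e * j) with hK_def
  have hfac : ∀ μ : Nat.Partition n,
      ∃ u : Polynomial ℤ, hO n μ =
        p ^ ((n / e + K) -
          ∑ j ∈ (Finset.Icc 1 n).filter (fun j => Odd j), μ.parts.count (e * j)) * u ∧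
        ¬ p ∣ u := by
    intro μ
    obtain ⟨u, hu, hnu⟩ := prod_factor he ((Finset.Icc 1 n).filter (fun i => Odd i))
      (fun i hi => (Finset.mem_filter.1 hi).2) (fun i => n / i - μ.parts.count i)
    refine ⟨u, ?_, hnu⟩
    rw [hO, hu, E_eq he hn μ]
  have hSle : ∀ μ : Nat.Partition n,
      ∑ j ∈ (Finset.Icc 1 n).filter (fun j => Odd j), μ.parts.count (e * j) ≤ n / e :=
    fun μ => S_le_div he0 μ
  have hKdvd : p ^ K ∣ GO n := by
    refine Finset.dvd_gcd fun μ _ => ?_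
    obtain ⟨u, hu, hnu⟩ := hfac μ
    rw [hu]
    exact dvd_mul_of_dvd_left (pow_dvd_pow p (by have := hSle μ; omega)) u
  have hμ0mem : specialP n e he0 ∈ oddParts n := by
    rw [oddParts, Finset.mem_filter]
    exact ⟨Finset.mem_univ _, specialP_mem_odd he⟩
  have hnotdvd : ¬ p ^ (K + 1) ∣ GO n := by
    intro hdvd
    obtain ⟨u, hu, hnu⟩ := hfac (specialP n e he0)
    rw [specialP_S he hn, show n / e + K - n / e = K by omega] at hu
    have h2 : p ^ (K + 1) ∣ p ^ K * u := by
      rw [← hu]; exact hdvd.trans (Finset.gcd_dvd hμ0mem)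
    obtain ⟨v, hv⟩ := h2
    rw [pow_succ, mul_assoc] at hv
    exact hnu ⟨v, mul_left_cancel₀ (pow_ne_zero K hp.ne_zero) hv⟩
  refine ⟨⟨hKdvd, hnotdvd⟩, ?_⟩
  intro μ hμ q hq
  obtain ⟨g, hg⟩ := hKdvd
  have hpg : ¬ p ∣ g := by
    rintro ⟨w, hw⟩
    exact hnotdvd ⟨w, by rw [hg, hw, pow_succ]; ring⟩
  have hSle' := hSle μ
  obtain ⟨u, hu, hnu⟩ := hfac μ
  rw [show n / e + K -
      (∑ j ∈ (Finset.Icc 1 n).filter (fun j => Odd j), μ.parts.count (e * j)) =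
      K + (n / e -
        ∑ j ∈ (Finset.Icc 1 n).filter (fun j => Odd j), μ.parts.count (e * j)) from by
    omega] at hu
  set k := n / e -
    ∑ j ∈ (Finset.Icc 1 n).filter (fun j => Odd j), μ.parts.count (e * j) with hk_def
  have key : p ^ k * u = g * q := by
    refine mul_left_cancel₀ (pow_ne_zero K hp.ne_zero) ?_
    calc p ^ K * (p ^ k * u) = p ^ (K + k) * u := by rw [pow_add, mul_assoc]
      _ = hO n μ := hu.symm
      _ = GO n * q := hq
      _ = p ^ K * g * q := by rw [hg]
      _ = p ^ K * (g * q) := mul_assoc _ _ _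
  refine ⟨k, ?_, hp.pow_dvd_of_dvd_mul_left k hpg ⟨u, key.symm⟩, ?_⟩
  · rw [hk_def, Nat.cast_sub hSle', Nat.cast_sum]
  · rintro ⟨w, hw⟩
    have h2 : p ^ k * u = p ^ k * (p * (g * w)) := by
      rw [key, hw, pow_succ]; ring
    exact hnu ⟨g * w, mul_left_cancel₀ (pow_ne_zero k hp.ne_zero) h2⟩
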